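/- arXiv:1411.5861 — 2 statements merged into one kernel-verified Lean document; each statement's English description precedes it below -/
import Mathlib

section
/- For any full-rank lattice Λ in ℝⁿ, any x > 0, and any u ∈ ℝⁿ, the translated Gaussian sum satisfies ∑_{t ∈ Λ} exp(−x‖t + u‖²) ≤ ∑_{t ∈ Λ} exp(−x‖t‖²), with equality if and only if u ∈ Λ. -/
open scoped BigOperators

/-- The full-rank lattice `{M ω : ω ∈ ℤⁿ}` generated by the columns of `M`. -/
def latticeSet {n : ℕ} (M : Matrix (Fin n) (Fin n) ℝ) : Set (Fin n → ℝ) :=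
  {v | ∃ ω : Fin n → ℤ, v = M.mulVec (fun j => (ω j : ℝ))}

/-- The psi function `ψ_Λ(x) = ∑_{t ∈ Λ} exp(−x‖t‖²)` of the lattice generated by `M`. -/
noncomputable def psi {n : ℕ} (M : Matrix (Fin n) (Fin n) ℝ) (x : ℝ) : ℝ :=
  ∑' ω : Fin n → ℤ, Real.exp (-x * ∑ i, (M.mulVec (fun j => (ω j : ℝ)) i) ^ 2)

/-!
Write `θ_x(u) = ∑_{ω ∈ ℤⁿ} exp(-x‖Mω + u‖²)`. Parametrising pairs of lattice points `(ω, σ)` by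
`ω + σ = 2m + ε`, `ω - σ = 2l + ε` with `ε ∈ {0,1}ⁿ`, the parallelogram law gives the duplication
formula `θ_x(v + w) θ_x(v - w) = ∑_ε θ_{2x}(Mε/2 + v) θ_{2x}(Mε/2 + w)`. Taking
`(v, w) = (u, u), (u, 0), (0, 0)`:
`∑_ε (θ_{2x}(Mε/2 + u) - θ_{2x}(Mε/2))² = θ_x(2u) θ_x(0) - 2 θ_x(u)² + θ_x(0)²`.
Hence `θ_x(u)² ≤ (θ_x(2u) θ_x(0) + θ_x(0)²) / 2`, and for `g = sup θ_x` (finite, as `θ_x` is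
`Λ`-periodic) this gives `g² ≤ (g θ_x(0) + θ_x(0)²) / 2`, i.e. `g = θ_x(0)`. If `θ_x(u) = θ_x(0)`,
the `ε = 0` term of the sum vanishes, so `θ_{2x}(u) = θ_{2x}(0)`; iterating,
`θ_{2ᵏx}(u) = θ_{2ᵏx}(0) ≥ 1`, whereas `θ_t(u) → 0` as `t → ∞` when `u ∉ Λ`.
-/

open Matrix Filter Topology

lemma summable_fin_prod_of_nonneg {α : Type*} {f : α → ℝ} (hf : Summable f) (hf₀ : 0 ≤ f) :
    ∀ n : ℕ, Summable fun ω : Fin n → α => ∏ j, f (ω j)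
  | 0 => .of_finite
  | n + 1 => by
    refine (Fin.consEquiv fun _ => α).summable_iff.mp ?_
    simpa [Function.comp_def, Fin.prod_univ_succ] using
      hf.mul_of_nonneg (summable_fin_prod_of_nonneg hf hf₀ n) hf₀
        fun _ => Finset.prod_nonneg fun j _ => hf₀ _

lemma summable_exp_neg_mul_int_sq {c : ℝ} (hc : 0 < c) :
    Summable fun m : ℤ => Real.exp (-c * (m : ℝ) ^ 2) := by
  have hnat : Summable fun m : ℕ => Real.exp (-c * (m : ℝ) ^ 2) := by
    refine (summable_geometric_of_lt_one (Real.exp_nonneg (-c))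
      (Real.exp_lt_one_iff.mpr (neg_lt_zero.mpr hc))).of_nonneg_of_le
        (fun _ => (Real.exp_pos _).le) fun m => ?_
    rw [← Real.exp_nat_mul, Real.exp_le_exp]
    have : (m : ℝ) ≤ (m : ℝ) ^ 2 := by exact_mod_cast Nat.le_self_pow two_ne_zero m
    nlinarith
  exact .of_nat_of_neg (by simpa using hnat) (by simpa using hnat)

lemma exists_pos_mul_sum_sq_le_sum_sq_mulVec {ι : Type*} [Fintype ι] [DecidableEq ι]
    {M : Matrix ι ι ℝ} (hM : M.det ≠ 0) :
    ∃ c > 0, ∀ v : ι → ℝ, c * ∑ j, v j ^ 2 ≤ ∑ i, (M *ᵥ v) i ^ 2 := by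
  set K := ∑ j, ∑ i, M⁻¹ j i ^ 2
  refine ⟨(K + 1)⁻¹, by positivity, fun v => ?_⟩
  have hv : M⁻¹ *ᵥ (M *ᵥ v) = v := by
    rw [mulVec_mulVec, nonsing_inv_mul M (isUnit_iff_ne_zero.mpr hM), one_mulVec]
  have hCS : ∀ j, v j ^ 2 ≤ (∑ i, M⁻¹ j i ^ 2) * ∑ i, (M *ᵥ v) i ^ 2 := fun j => by
    rw [← congrFun hv j]
    exact Finset.sum_mul_sq_le_sq_mul_sq Finset.univ (fun i => M⁻¹ j i) (M *ᵥ v)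
  have hsum : ∑ j, v j ^ 2 ≤ K * ∑ i, (M *ᵥ v) i ^ 2 := by
    simpa only [K, Finset.sum_mul] using Finset.sum_le_sum fun j (_ : j ∈ Finset.univ) => hCS j
  rw [inv_mul_le_iff₀ (by positivity)]
  nlinarith [show 0 ≤ ∑ i, (M *ᵥ v) i ^ 2 by positivity]

lemma exp_neg_mul_sum_sq_add_le {ι : Type*} [Fintype ι] {x : ℝ} (hx : 0 ≤ x) (a b : ι → ℝ) :
    Real.exp (-x * ∑ i, (a + b) i ^ 2) ≤
      Real.exp (x * ∑ i, b i ^ 2) * Real.exp (-(x / 2) * ∑ i, a i ^ 2) := by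
  rw [← Real.exp_add, Real.exp_le_exp]
  have h : ∀ i, a i ^ 2 / 2 ≤ (a + b) i ^ 2 + b i ^ 2 := fun i => by
    simp only [Pi.add_apply]; nlinarith [sq_nonneg (a i + 2 * b i)]
  have := Finset.sum_le_sum fun i (_ : i ∈ Finset.univ) => h i
  rw [Finset.sum_add_distrib, ← Finset.sum_div] at this
  nlinarith

lemma exp_neg_mul_sum_sq_add_mul_exp_neg_mul_sum_sq_sub {ι : Type*} [Fintype ι] (x : ℝ)
    (a b : ι → ℝ) :
    Real.exp (-x * ∑ i, (a + b) i ^ 2) * Real.exp (-x * ∑ i, (a - b) i ^ 2) =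
      Real.exp (-(2 * x) * ∑ i, a i ^ 2) * Real.exp (-(2 * x) * ∑ i, b i ^ 2) := by
  rw [← Real.exp_add, ← Real.exp_add]
  congr 1
  simp only [Pi.add_apply, Pi.sub_apply, Finset.mul_sum, ← Finset.sum_add_distrib]
  exact Finset.sum_congr rfl fun i _ => by ring

lemma apply_le_apply_zero_of_sq_le {α : Type*} [Add α] [Zero α] {f : α → ℝ}
    (hf : BddAbove (Set.range f)) (h₀ : 0 ≤ f 0)
    (h : ∀ a, f a ^ 2 ≤ (f (a + a) * f 0 + f 0 ^ 2) / 2) (a : α) : f a ≤ f 0 := by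
  set g := ⨆ a, f a
  have hfg : ∀ a, f a ≤ g := le_ciSup hf
  have hg₀ : 0 ≤ g := h₀.trans (hfg 0)
  have hB : ∀ a, f a ^ 2 ≤ (g * f 0 + f 0 ^ 2) / 2 := fun a =>
    (h a).trans (by gcongr; exact hfg _)
  have hg : g ≤ √((g * f 0 + f 0 ^ 2) / 2) :=
    ciSup_le fun a => (le_abs_self _).trans (Real.abs_le_sqrt (hB a))
  have hg2 : g ^ 2 ≤ (g * f 0 + f 0 ^ 2) / 2 := (Real.le_sqrt hg₀ (by positivity)).mp hg
  have : g ≤ f 0 := by nlinarith [hfg 0]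
  exact (hfg a).trans this

def parityVec {n : ℕ} (ε : Fin n → Fin 2) : Fin n → ℤ := fun j => (ε j : ℕ)

def parityPairEquiv (n : ℕ) :
    (Fin n → Fin 2) × (Fin n → ℤ) × (Fin n → ℤ) ≃ (Fin n → ℤ) × (Fin n → ℤ) where
  toFun z := (z.2.1 + z.2.2 + parityVec z.1, z.2.1 - z.2.2)
  invFun p := (fun j => ⟨((p.1 j + p.2 j) % 2).toNat, by omega⟩,
    fun j => (p.1 j + p.2 j) / 2, fun j => (p.1 j + p.2 j) / 2 - p.2 j)
  left_inv := by
    rintro ⟨ε, m, l⟩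
    refine Prod.ext (funext fun j => Fin.ext ?_)
      (Prod.ext (funext fun j => ?_) (funext fun j => ?_)) <;>
      simp only [parityVec, Pi.add_apply, Pi.sub_apply] <;> omega
  right_inv := by
    rintro ⟨ω, σ⟩
    refine Prod.ext (funext fun j => ?_) (funext fun j => ?_) <;>
      simp only [parityVec, Pi.add_apply, Pi.sub_apply] <;> omega

def latticeMap {n : ℕ} (M : Matrix (Fin n) (Fin n) ℝ) : (Fin n → ℤ) →+ (Fin n → ℝ) :=
  M.mulVecLin.toAddMonoidHom.comp ((Int.castAddHom ℝ).compLeft (Fin n))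

lemma latticeMap_apply {n : ℕ} (M : Matrix (Fin n) (Fin n) ℝ) (ω : Fin n → ℤ) :
    latticeMap M ω = M *ᵥ fun j => (ω j : ℝ) := rfl

noncomputable def latticeTheta {n : ℕ} (M : Matrix (Fin n) (Fin n) ℝ) (x : ℝ) (u : Fin n → ℝ) :
    ℝ :=
  ∑' ω, Real.exp (-x * ∑ i, (latticeMap M ω + u) i ^ 2)

section LatticeTheta

variable {n : ℕ} {M : Matrix (Fin n) (Fin n) ℝ} {x : ℝ}

lemma summable_exp_neg_mul_sum_sq_latticeMap_add (hM : M.det ≠ 0) (hx : 0 < x) (u : Fin n → ℝ) :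
    Summable fun ω => Real.exp (-x * ∑ i, (latticeMap M ω + u) i ^ 2) := by
  obtain ⟨c, hc, hMc⟩ := exists_pos_mul_sum_sq_le_sum_sq_mulVec hM
  have hcentered : Summable fun ω => Real.exp (-(x / 2) * ∑ i, latticeMap M ω i ^ 2) := by
    refine (summable_fin_prod_of_nonneg (summable_exp_neg_mul_int_sq (c := x / 2 * c)
      (by positivity)) (fun _ => (Real.exp_pos _).le) n).of_nonneg_of_le
        (fun _ => (Real.exp_pos _).le) fun ω => ?_
    rw [← Real.exp_sum, Real.exp_le_exp, ← Finset.mul_sum, latticeMap_apply]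
    nlinarith [hMc fun j => (ω j : ℝ)]
  exact (hcentered.mul_left _).of_nonneg_of_le (fun _ => (Real.exp_pos _).le)
    fun ω => exp_neg_mul_sum_sq_add_le hx.le (latticeMap M ω) u

lemma latticeTheta_nonneg (M : Matrix (Fin n) (Fin n) ℝ) (x : ℝ) (u : Fin n → ℝ) :
    0 ≤ latticeTheta M x u :=
  tsum_nonneg fun _ => (Real.exp_pos _).le

lemma one_le_latticeTheta_zero (hM : M.det ≠ 0) (hx : 0 < x) : 1 ≤ latticeTheta M x 0 := by
  have h := (summable_exp_neg_mul_sum_sq_latticeMap_add hM hx 0).le_tsum 0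
    fun _ _ => (Real.exp_pos _).le
  simpa [latticeTheta] using h

lemma latticeTheta_latticeMap_add (M : Matrix (Fin n) (Fin n) ℝ) (x : ℝ) (γ : Fin n → ℤ)
    (u : Fin n → ℝ) : latticeTheta M x (latticeMap M γ + u) = latticeTheta M x u := by
  simpa only [latticeTheta, Equiv.coe_addRight, map_add, add_assoc] using
    (Equiv.addRight γ).tsum_eq fun ω => Real.exp (-x * ∑ i, (latticeMap M ω + u) i ^ 2)

lemma summable_exp_mul_exp_latticeMap_add (hM : M.det ≠ 0) (hx : 0 < x) (v w : Fin n → ℝ) :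
    Summable fun p : (Fin n → ℤ) × (Fin n → ℤ) =>
      Real.exp (-x * ∑ i, (latticeMap M p.1 + v) i ^ 2) *
        Real.exp (-x * ∑ i, (latticeMap M p.2 + w) i ^ 2) :=
  (summable_exp_neg_mul_sum_sq_latticeMap_add hM hx v).mul_of_nonneg
    (summable_exp_neg_mul_sum_sq_latticeMap_add hM hx w)
    (fun _ => (Real.exp_pos _).le) fun _ => (Real.exp_pos _).le

lemma latticeTheta_mul_latticeTheta (hM : M.det ≠ 0) (hx : 0 < x) (v w : Fin n → ℝ) :
    latticeTheta M x v * latticeTheta M x w = ∑' p : (Fin n → ℤ) × (Fin n → ℤ),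
      Real.exp (-x * ∑ i, (latticeMap M p.1 + v) i ^ 2) *
        Real.exp (-x * ∑ i, (latticeMap M p.2 + w) i ^ 2) :=
  (summable_exp_neg_mul_sum_sq_latticeMap_add hM hx v).tsum_mul_tsum
    (summable_exp_neg_mul_sum_sq_latticeMap_add hM hx w)
    (summable_exp_mul_exp_latticeMap_add hM hx v w)

noncomputable def halfParityShift (M : Matrix (Fin n) (Fin n) ℝ) (ε : Fin n → Fin 2) :
    Fin n → ℝ :=
  (2⁻¹ : ℝ) • latticeMap M (parityVec ε)

lemma latticeTheta_add_mul_latticeTheta_sub (hM : M.det ≠ 0) (hx : 0 < x) (v w : Fin n → ℝ) :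
    latticeTheta M x (v + w) * latticeTheta M x (v - w) =
      ∑ ε, latticeTheta M (2 * x) (halfParityShift M ε + v) *
        latticeTheta M (2 * x) (halfParityShift M ε + w) := by
  have h2x : 0 < 2 * x := by linarith
  set F : (Fin n → ℤ) × (Fin n → ℤ) → ℝ := fun p =>
    Real.exp (-x * ∑ i, (latticeMap M p.1 + (v + w)) i ^ 2) *
      Real.exp (-x * ∑ i, (latticeMap M p.2 + (v - w)) i ^ 2)
  set G : (Fin n → Fin 2) × (Fin n → ℤ) × (Fin n → ℤ) → ℝ := fun z =>
    Real.exp (-(2 * x) * ∑ i, (latticeMap M z.2.1 + (halfParityShift M z.1 + v)) i ^ 2) *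
      Real.exp (-(2 * x) * ∑ i, (latticeMap M z.2.2 + (halfParityShift M z.1 + w)) i ^ 2)
  have hFG : ∀ z, F (parityPairEquiv n z) = G z := by
    rintro ⟨ε, m, l⟩
    set a := latticeMap M m + (halfParityShift M ε + v)
    set b := latticeMap M l + (halfParityShift M ε + w)
    have hadd : latticeMap M (m + l + parityVec ε) + (v + w) = a + b := by
      simp only [a, b, halfParityShift, map_add]; module
    have hsub : latticeMap M (m - l) + (v - w) = a - b := by
      simp only [a, b, map_sub]; module
    simp only [F, G, parityPairEquiv, Equiv.coe_fn_mk]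
    rw [hadd, hsub, exp_neg_mul_sum_sq_add_mul_exp_neg_mul_sum_sq_sub]
  have hG : Summable G :=
    ((parityPairEquiv n).summable_iff.mpr
      (summable_exp_mul_exp_latticeMap_add hM hx _ _)).congr hFG
  have hfiber (ε : Fin n → Fin 2) :
      latticeTheta M (2 * x) (halfParityShift M ε + v) *
        latticeTheta M (2 * x) (halfParityShift M ε + w) = ∑' p, G (ε, p) :=
    latticeTheta_mul_latticeTheta hM h2x _ _
  rw [latticeTheta_mul_latticeTheta hM hx, ← (parityPairEquiv n).tsum_eq, tsum_congr hFG,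
    hG.tsum_prod' fun ε => (hG.comp_injective (Prod.mk_right_injective ε)), tsum_fintype]
  exact Finset.sum_congr rfl fun ε _ => (hfiber ε).symm

lemma sum_sq_sub_latticeTheta (hM : M.det ≠ 0) (hx : 0 < x) (u : Fin n → ℝ) :
    ∑ ε, (latticeTheta M (2 * x) (halfParityShift M ε + u) -
        latticeTheta M (2 * x) (halfParityShift M ε)) ^ 2 =
      latticeTheta M x (u + u) * latticeTheta M x 0 - 2 * latticeTheta M x u ^ 2 +
        latticeTheta M x 0 ^ 2 := by
  have huu := latticeTheta_add_mul_latticeTheta_sub hM hx u u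
  have hu0 := latticeTheta_add_mul_latticeTheta_sub hM hx u 0
  have h00 := latticeTheta_add_mul_latticeTheta_sub hM hx 0 0
  simp only [add_zero, sub_zero, sub_self] at huu hu0 h00
  simp only [sub_sq', Finset.sum_add_distrib, Finset.sum_sub_distrib, mul_assoc,
    ← Finset.mul_sum]
  simp only [← sq] at huu hu0 h00
  linarith

lemma latticeTheta_le_exp_mul_latticeTheta_half (hM : M.det ≠ 0) (hx : 0 < x)
    (u : Fin n → ℝ) :
    latticeTheta M x u ≤ Real.exp (x * ∑ i, u i ^ 2) * latticeTheta M (x / 2) 0 := by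
  rw [latticeTheta, latticeTheta, ← tsum_mul_left]
  refine (summable_exp_neg_mul_sum_sq_latticeMap_add hM hx u).tsum_le_tsum
    (fun ω => by simpa using exp_neg_mul_sum_sq_add_le hx.le (latticeMap M ω) u) ?_
  simpa using (summable_exp_neg_mul_sum_sq_latticeMap_add hM (half_pos hx) 0).mul_left _

lemma exists_latticeMap_add_mulVec_eq (hM : M.det ≠ 0) (u : Fin n → ℝ) :
    ∃ γ, ∃ r ∈ Set.Icc (0 : Fin n → ℝ) 1, latticeMap M γ + M *ᵥ r = u := by
  set c := M⁻¹ *ᵥ u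
  refine ⟨fun j => ⌊c j⌋, fun j => Int.fract (c j),
    ⟨fun j => Int.fract_nonneg _, fun j => (Int.fract_lt_one _).le⟩, ?_⟩
  rw [latticeMap_apply, ← mulVec_add]
  have : ((fun j => (⌊c j⌋ : ℝ)) + fun j => Int.fract (c j)) = c :=
    funext fun j => Int.floor_add_fract (c j)
  rw [this, mulVec_mulVec, mul_nonsing_inv M (isUnit_iff_ne_zero.mpr hM), one_mulVec]

lemma bddAbove_range_latticeTheta (hM : M.det ≠ 0) (hx : 0 < x) :
    BddAbove (Set.range (latticeTheta M x)) := by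
  obtain ⟨C, hC⟩ := (isCompact_Icc (a := (0 : Fin n → ℝ)) (b := 1)).exists_bound_of_continuousOn
      (f := fun r => ∑ i, (M *ᵥ r) i ^ 2) (by fun_prop)
  refine ⟨Real.exp (x * C) * latticeTheta M (x / 2) 0, ?_⟩
  rintro _ ⟨u, rfl⟩
  obtain ⟨γ, r, hr, rfl⟩ := exists_latticeMap_add_mulVec_eq hM u
  rw [latticeTheta_latticeMap_add]
  refine (latticeTheta_le_exp_mul_latticeTheta_half hM hx _).trans ?_
  gcongr
  · exact latticeTheta_nonneg M _ 0
  · exact (le_abs_self _).trans (hC r hr)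

lemma latticeTheta_le_latticeTheta_zero (hM : M.det ≠ 0) (hx : 0 < x) (u : Fin n → ℝ) :
    latticeTheta M x u ≤ latticeTheta M x 0 := by
  refine apply_le_apply_zero_of_sq_le (bddAbove_range_latticeTheta hM hx)
    (latticeTheta_nonneg M x 0) (fun v => ?_) u
  have := sum_sq_sub_latticeTheta hM hx v
  nlinarith [Finset.sum_nonneg fun ε (_ : ε ∈ Finset.univ) =>
    sq_nonneg (latticeTheta M (2 * x) (halfParityShift M ε + v) -
      latticeTheta M (2 * x) (halfParityShift M ε))]

lemma halfParityShift_zero (M : Matrix (Fin n) (Fin n) ℝ) : halfParityShift M 0 = 0 := by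
  have : parityVec (0 : Fin n → Fin 2) = 0 := rfl
  simp [halfParityShift, this]

lemma latticeTheta_two_mul_eq_of_eq (hM : M.det ≠ 0) (hx : 0 < x) {u : Fin n → ℝ}
    (h : latticeTheta M x u = latticeTheta M x 0) :
    latticeTheta M (2 * x) u = latticeTheta M (2 * x) 0 := by
  have hsum := sum_sq_sub_latticeTheta hM hx u
  have hle : ∑ ε, (latticeTheta M (2 * x) (halfParityShift M ε + u) -
      latticeTheta M (2 * x) (halfParityShift M ε)) ^ 2 ≤ 0 := by
    rw [hsum, h]
    nlinarith [latticeTheta_le_latticeTheta_zero hM hx (u + u), latticeTheta_nonneg M x 0]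
  have hzero := (Finset.sum_eq_zero_iff_of_nonneg fun ε _ => sq_nonneg _).mp
    (le_antisymm hle (Finset.sum_nonneg fun ε _ => sq_nonneg _)) 0
    (Finset.mem_univ _)
  simpa [halfParityShift_zero, sub_eq_zero] using hzero

lemma latticeTheta_two_pow_mul_eq_of_eq (hM : M.det ≠ 0) (hx : 0 < x) {u : Fin n → ℝ}
    (h : latticeTheta M x u = latticeTheta M x 0) :
    ∀ k : ℕ, latticeTheta M (2 ^ k * x) u = latticeTheta M (2 ^ k * x) 0
  | 0 => by simpa using h
  | k + 1 => by
    rw [pow_succ', mul_assoc]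
    exact latticeTheta_two_mul_eq_of_eq hM (by positivity)
      (latticeTheta_two_pow_mul_eq_of_eq hM hx h k)

lemma tendsto_latticeTheta_atTop (hM : M.det ≠ 0) {u : Fin n → ℝ} (hu : u ∉ latticeSet M) :
    Tendsto (fun t => latticeTheta M t u) atTop (𝓝 0) := by
  have hS : ∀ ω, 0 < ∑ i, (latticeMap M ω + u) i ^ 2 := by
    intro ω
    refine lt_of_le_of_ne (by positivity) fun h0 => hu ⟨-ω, ?_⟩
    have : latticeMap M ω + u = 0 := funext fun i =>
      pow_eq_zero_iff two_ne_zero |>.mp <|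
        (Finset.sum_eq_zero_iff_of_nonneg fun i _ => sq_nonneg _).mp h0.symm i (Finset.mem_univ i)
    rw [← latticeMap_apply, map_neg, eq_neg_iff_add_eq_zero, add_comm, this]
  have h := tendsto_tsum_of_dominated_convergence (g := fun _ => 0)
    (f := fun t ω => Real.exp (-t * ∑ i, (latticeMap M ω + u) i ^ 2))
    (summable_exp_neg_mul_sum_sq_latticeMap_add hM one_pos u)
    (fun ω => Real.tendsto_exp_atBot.comp <|
      tendsto_neg_atTop_atBot.atBot_mul_const (hS ω))
    (eventually_ge_atTop 1 |>.mono fun t ht ω => by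
      rw [Real.norm_of_nonneg (Real.exp_pos _).le, Real.exp_le_exp]
      nlinarith [hS ω])
  rwa [tsum_zero] at h

lemma mem_latticeSet_of_latticeTheta_eq (hM : M.det ≠ 0) (hx : 0 < x) {u : Fin n → ℝ}
    (h : latticeTheta M x u = latticeTheta M x 0) : u ∈ latticeSet M := by
  by_contra hu
  have hlim := (tendsto_latticeTheta_atTop hM hu).comp <|
    (tendsto_pow_atTop_atTop_of_one_lt one_lt_two).atTop_mul_const hx
  have hge : ∀ k : ℕ, 1 ≤ latticeTheta M (2 ^ k * x) u := fun k => by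
    rw [latticeTheta_two_pow_mul_eq_of_eq hM hx h k]
    exact one_le_latticeTheta_zero hM (by positivity)
  linarith [ge_of_tendsto' hlim hge]

end LatticeTheta

theorem translated_gaussian_sum_le_iff {n : ℕ} (M : Matrix (Fin n) (Fin n) ℝ)
    (hM : M.det ≠ 0) (x : ℝ) (hx : 0 < x) (u : Fin n → ℝ) :
    (∑' ω : Fin n → ℤ,
        Real.exp (-x * ∑ i, (M.mulVec (fun j => (ω j : ℝ)) i + u i) ^ 2)) ≤ psi M x ∧
    ((∑' ω : Fin n → ℤ,
        Real.exp (-x * ∑ i, (M.mulVec (fun j => (ω j : ℝ)) i + u i) ^ 2)) = psi M x ↔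
      u ∈ latticeSet M) := by
  have hpsi : psi M x = latticeTheta M x 0 := by simp [psi, latticeTheta, latticeMap_apply]
  change latticeTheta M x u ≤ _ ∧ (latticeTheta M x u = _ ↔ _)
  rw [hpsi]
  refine ⟨latticeTheta_le_latticeTheta_zero hM hx u,
    mem_latticeSet_of_latticeTheta_eq hM hx, ?_⟩
  rintro ⟨ω, rfl⟩
  rw [← latticeMap_apply]
  simpa using latticeTheta_latticeMap_add M x ω 0
end

section
/- Let Λ_o be the orthogonal lattice in ℝⁿ generated by a₁e₁, …, aₙeₙ with all aᵢ > 0, and let Λ_s be a lattice generated by an upper triangular matrix M_s with diagonal entries a₁, …, aₙ such that Λ_s ≠ Λ_o. Then for all x > 0, ψ_{Λ_s}(x) < ψ_{Λ_o}(x). -/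
open scoped BigOperators

/-!
Split the sum defining `ψ_M` along the coordinate `ω k`. If column `k` of `M` vanishes off the
diagonal, the summand is `exp (-x (M k k * ω k + c) ^ 2)` times a factor that depends neither on
`ω k` nor on row `k`, where `c` depends only on the other coordinates of `ω`. By Poisson summation,
`∑ t : ℤ, exp (-x (d t + c) ^ 2)` is a positive multiple of
`∑ n : ℤ, exp (-π² n² / (x d²)) cos (2π n c / d)`, which is largest exactly when `c ∈ dℤ`.
Hence replacing row `k` by `M k k • e_k` does not decrease `ψ`, and increases it strictly if some
entry `M k j` is not in `M k k • ℤ`. Diagonalizing the rows of an upper triangular matrix one at a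
time, from the top down, ends at the orthogonal lattice; and if all `M k j` lie in `a k • ℤ`, then
`M = diag(a) U` with `U` integral unipotent, so the two lattices coincide.
-/

open Real Matrix

lemma summable_exp_neg_mul_int_sq_s3 {b : ℝ} (hb : 0 < b) :
    Summable fun t : ℤ => rexp (-b * t ^ 2) := by
  refine (summable_pow_mul_jacobiTheta₂_term_bound 0 (div_pos hb pi_pos) 0).congr fun t => ?_
  field_simp
  ring_nf

lemma tsum_exp_neg_mul_int_add_sq {a : ℝ} (ha : 0 < a) (γ : ℝ) :
    ∑' t : ℤ, rexp (-π * a * (t + γ) ^ 2) =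
      a⁻¹ ^ (1 / 2 : ℝ) * ∑' n : ℤ, rexp (-π / a * n ^ 2) * cos (2 * π * γ * n) := by
  have h := Complex.tsum_exp_neg_quadratic (a := ((a⁻¹ : ℝ) : ℂ)) (by simpa using ha)
    (-Complex.I * γ)
  have hshift : ∑' n : ℤ, Complex.exp (-π / (a⁻¹ : ℝ) * (n + Complex.I * (-Complex.I * γ)) ^ 2) =
      (∑' t : ℤ, rexp (-π * a * (t + γ) ^ 2) : ℝ) := by
    rw [Complex.ofReal_tsum]
    refine tsum_congr fun t => ?_
    rw [Complex.ofReal_exp]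
    congr 1
    push_cast
    field_simp
    ring_nf
    simp
  have hterm (n : ℤ) :
      Complex.exp (-π * (a⁻¹ : ℝ) * n ^ 2 + 2 * π * (-Complex.I * γ) * n) =
        rexp (-π / a * n ^ 2) * Complex.exp ((-(2 * π * γ * n) : ℝ) * Complex.I) := by
    rw [Complex.ofReal_exp, ← Complex.exp_add]
    congr 1
    push_cast
    ring
  have hsum : Summable fun n : ℤ =>
      Complex.exp (-π * (a⁻¹ : ℝ) * n ^ 2 + 2 * π * (-Complex.I * γ) * n) := by
    refine (summable_exp_neg_mul_int_sq_s3 (b := π / a) (by positivity)).of_norm_bounded fun n => ?_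
    rw [hterm, norm_mul, Complex.norm_exp_ofReal_mul_I, mul_one, Complex.norm_real,
      norm_of_nonneg (exp_pos _).le, neg_div]
  have hc : ((a⁻¹ : ℝ) : ℂ) ^ (1 / 2 : ℂ) = ((a⁻¹ ^ (1 / 2 : ℝ) : ℝ) : ℂ) := by
    rw [Complex.ofReal_cpow (by positivity)]
    push_cast
    rfl
  rw [hshift, hc, one_div,
    eq_inv_mul_iff_mul_eq₀ (by exact_mod_cast (by positivity : a⁻¹ ^ (1 / 2 : ℝ) ≠ 0))] at h
  have hre := congrArg Complex.re h
  rw [Complex.re_ofReal_mul, Complex.re_tsum hsum, Complex.ofReal_re] at hre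
  rw [← hre]
  congr 1
  refine tsum_congr fun n => ?_
  rw [hterm, Complex.re_ofReal_mul, Complex.exp_ofReal_mul_I_re, cos_neg]

lemma tsum_gaussian_shift_lt {x d c : ℝ} (hx : 0 < x) (hd : d ≠ 0) (hc : ∀ m : ℤ, c ≠ d * m) :
    ∑' t : ℤ, rexp (-x * (d * t + c) ^ 2) < ∑' t : ℤ, rexp (-x * (d * t) ^ 2) := by
  have ha : 0 < x * d ^ 2 / π := by positivity
  have hpoisson (c : ℝ) : ∑' t : ℤ, rexp (-x * (d * t + c) ^ 2) =
      (x * d ^ 2 / π)⁻¹ ^ (1 / 2 : ℝ) *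
        ∑' n : ℤ, rexp (-π / (x * d ^ 2 / π) * n ^ 2) * cos (2 * π * (c / d) * n) := by
    rw [← tsum_exp_neg_mul_int_add_sq ha]
    refine tsum_congr fun t => ?_
    field_simp
  have hsum (c : ℝ) : Summable fun n : ℤ =>
      rexp (-π / (x * d ^ 2 / π) * n ^ 2) * cos (2 * π * (c / d) * n) :=
    (summable_exp_neg_mul_int_sq_s3 (b := π / (x * d ^ 2 / π)) (by positivity)).of_norm_bounded
      fun n => by
        rw [norm_mul, norm_of_nonneg (exp_pos _).le, neg_div]
        exact mul_le_of_le_one_right (exp_pos _).le (abs_cos_le_one _)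
  have hcos : cos (2 * π * (c / d) * (1 : ℤ)) < 1 := by
    refine (cos_le_one _).lt_of_ne fun h => ?_
    obtain ⟨m, hm⟩ := (cos_eq_one_iff _).1 h
    field_simp at hm
    exact hc m (by push_cast at hm; linarith)
  have h0 := hpoisson 0
  simp only [add_zero, zero_div, mul_zero, zero_mul, cos_zero, mul_one] at h0
  rw [hpoisson c, h0]
  refine mul_lt_mul_of_pos_left ?_ (by positivity)
  exact (hsum c).tsum_lt_tsum (i := 1)
    (fun n => mul_le_of_le_one_right (exp_pos _).le (cos_le_one _))
    (mul_lt_of_lt_one_right (exp_pos _) hcos) (by simpa using hsum 0)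

lemma tsum_gaussian_shift_le {x d : ℝ} (hx : 0 < x) (hd : d ≠ 0) (c : ℝ) :
    ∑' t : ℤ, rexp (-x * (d * t + c) ^ 2) ≤ ∑' t : ℤ, rexp (-x * (d * t) ^ 2) := by
  by_cases hc : ∀ m : ℤ, c ≠ d * m
  · exact (tsum_gaussian_shift_lt hx hd hc).le
  push Not at hc
  obtain ⟨m, rfl⟩ := hc
  have hshift := (Equiv.addRight m).tsum_eq fun t : ℤ => rexp (-x * (d * t) ^ 2)
  rw [← hshift]
  refine (tsum_congr fun t => ?_).le
  simp [mul_add]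

lemma summable_prod_apply_of_nonneg {ι : Type*} [Fintype ι] {κ : ι → Type*}
    {f : ∀ i, κ i → ℝ} (hf₀ : ∀ i k, 0 ≤ f i k) (hf : ∀ i, Summable (f i)) :
    Summable fun x : ∀ i, κ i => ∏ i, f i (x i) := by
  classical
  refine summable_of_sum_le (c := ∏ i, ∑' k, f i k)
    (fun x => Finset.prod_nonneg fun i _ => hf₀ i _) fun s => ?_
  calc ∑ x ∈ s, ∏ i, f i (x i)
      ≤ ∑ x ∈ Fintype.piFinset fun i => s.image (· i), ∏ i, f i (x i) :=
        Finset.sum_le_sum_of_subset_of_nonneg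
          (fun x hx => Fintype.mem_piFinset.2 fun i => Finset.mem_image_of_mem _ hx)
          fun _ _ _ => Finset.prod_nonneg fun i _ => hf₀ i _
    _ = ∏ i, ∑ k ∈ s.image (· i), f i k := (Finset.prod_univ_sum _ _).symm
    _ ≤ ∏ i, ∑' k, f i k :=
        Finset.prod_le_prod (fun i _ => Finset.sum_nonneg fun k _ => hf₀ i k)
          fun i _ => (hf i).sum_le_tsum _ fun k _ => hf₀ i k

lemma summable_exp_neg_mul_sum_sq {ι : Type*} [Fintype ι] {c : ℝ} (hc : 0 < c) :
    Summable fun ω : ι → ℤ => rexp (-c * ∑ i, (ω i : ℝ) ^ 2) := by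
  refine (summable_prod_apply_of_nonneg (f := fun _ (t : ℤ) => rexp (-c * (t : ℝ) ^ 2))
    (fun _ _ => (exp_pos _).le) fun _ => summable_exp_neg_mul_int_sq_s3 hc).congr fun ω => ?_
  rw [← exp_sum, Finset.mul_sum]

lemma sum_sq_mulVec_le {ι : Type*} [Fintype ι] (B : Matrix ι ι ℝ) (v : ι → ℝ) :
    ∑ i, (B *ᵥ v) i ^ 2 ≤ (∑ i, ∑ j, B i j ^ 2) * ∑ j, v j ^ 2 := by
  rw [Finset.sum_mul]
  exact Finset.sum_le_sum fun i _ => Finset.sum_mul_sq_le_sq_mul_sq _ _ _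

lemma hasSum_tsum_funSplitAt {α β E : Type*} [DecidableEq α] [NormedAddCommGroup E]
    [CompleteSpace E] (i : α) {f : (α → β) → E} (hf : Summable f) :
    HasSum (fun ω' => ∑' t, f ((Equiv.funSplitAt i β).symm (t, ω'))) (∑' ω, f ω) := by
  let e := (Equiv.prodComm _ _).trans (Equiv.funSplitAt i β).symm
  have hg : Summable (f ∘ e) := e.summable_iff.2 hf
  rw [← e.tsum_eq]
  exact hg.hasSum.prod_fiberwise fun ω' => (hg.prod_factor ω').hasSum

variable {n : ℕ}

noncomputable def psiSummand (M : Matrix (Fin n) (Fin n) ℝ) (x : ℝ) (ω : Fin n → ℤ) : ℝ :=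
  rexp (-x * ∑ i, (M *ᵥ fun j => (ω j : ℝ)) i ^ 2)

lemma psi_eq_tsum_psiSummand (M : Matrix (Fin n) (Fin n) ℝ) (x : ℝ) :
    psi M x = ∑' ω, psiSummand M x ω := rfl

lemma summable_psiSummand {M : Matrix (Fin n) (Fin n) ℝ} {x : ℝ} (hx : 0 < x)
    (hM : IsUnit M.det) : Summable (psiSummand M x) := by
  set K := ∑ i, ∑ j, M⁻¹ i j ^ 2
  have hK : 0 ≤ K := Finset.sum_nonneg fun _ _ => Finset.sum_nonneg fun _ _ => sq_nonneg _
  refine (summable_exp_neg_mul_sum_sq (c := x / (K + 1)) (by positivity)).of_nonneg_of_le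
    (fun _ => (exp_pos _).le) fun ω => exp_le_exp.2 ?_
  set v := M *ᵥ fun j => (ω j : ℝ)
  have hω : (fun j => (ω j : ℝ)) = M⁻¹ *ᵥ v := by
    rw [mulVec_mulVec, nonsing_inv_mul _ hM, one_mulVec]
  have hle := sum_sq_mulVec_le M⁻¹ v
  rw [← hω] at hle
  have hv : 0 ≤ ∑ i, v i ^ 2 := Finset.sum_nonneg fun _ _ => sq_nonneg _
  rw [neg_mul, neg_mul, neg_le_neg_iff, div_mul_eq_mul_div, div_le_iff₀ (by positivity)]
  nlinarith

noncomputable def extendByZero (k : Fin n) (ω' : {j // j ≠ k} → ℤ) : Fin n → ℝ :=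
  fun j => ((Equiv.funSplitAt k ℤ).symm (0, ω') j : ℝ)

def diagonalizeRow (M : Matrix (Fin n) (Fin n) ℝ) (k : Fin n) : Matrix (Fin n) (Fin n) ℝ :=
  M.updateRow k (Pi.single k (M k k))

section RowStep

variable {M : Matrix (Fin n) (Fin n) ℝ} {k : Fin n} {x : ℝ}

lemma psiSummand_funSplitAt_symm (hcol : ∀ i, i ≠ k → M i k = 0) (t : ℤ)
    (ω' : {j // j ≠ k} → ℤ) :
    psiSummand M x ((Equiv.funSplitAt k ℤ).symm (t, ω')) =
      rexp (-x * (M k k * t + (M *ᵥ extendByZero k ω') k) ^ 2) *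
        rexp (-x * ∑ i ∈ Finset.univ.erase k, (M *ᵥ extendByZero k ω') i ^ 2) := by
  have hsplit : (fun j => ((Equiv.funSplitAt k ℤ).symm (t, ω') j : ℝ)) =
      extendByZero k ω' + Pi.single k (t : ℝ) := by
    funext j
    by_cases hj : j = k
    · subst hj; simp [extendByZero, Equiv.funSplitAt, Equiv.piSplitAt]
    · simp [extendByZero, Equiv.funSplitAt, Equiv.piSplitAt, hj]
  have hrow (i : Fin n) : (M *ᵥ (extendByZero k ω' + Pi.single k (t : ℝ))) i =
      (M *ᵥ extendByZero k ω') i + if i = k then M k k * t else 0 := by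
    rw [mulVec_add, mulVec_single]
    by_cases hi : i = k
    · subst hi; simp
    · simp [hi, hcol i hi]
  rw [psiSummand, hsplit, ← exp_add, ← Finset.add_sum_erase _ _ (Finset.mem_univ k), hrow,
    if_pos rfl]
  congr 1
  rw [mul_add, add_comm (M k k * t)]
  congr 2
  refine Finset.sum_congr rfl fun i hi => ?_
  rw [hrow, if_neg (Finset.ne_of_mem_erase hi), add_zero]

lemma tsum_psiSummand_funSplitAt_symm (hcol : ∀ i, i ≠ k → M i k = 0)
    (ω' : {j // j ≠ k} → ℤ) :
    ∑' t, psiSummand M x ((Equiv.funSplitAt k ℤ).symm (t, ω')) =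
      (∑' t : ℤ, rexp (-x * (M k k * t + (M *ᵥ extendByZero k ω') k) ^ 2)) *
        rexp (-x * ∑ i ∈ Finset.univ.erase k, (M *ᵥ extendByZero k ω') i ^ 2) := by
  simp_rw [psiSummand_funSplitAt_symm hcol, tsum_mul_right]

lemma tsum_psiSummand_diagonalizeRow_funSplitAt_symm (hcol : ∀ i, i ≠ k → M i k = 0)
    (ω' : {j // j ≠ k} → ℤ) :
    ∑' t, psiSummand (diagonalizeRow M k) x ((Equiv.funSplitAt k ℤ).symm (t, ω')) =
      (∑' t : ℤ, rexp (-x * (M k k * t) ^ 2)) *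
        rexp (-x * ∑ i ∈ Finset.univ.erase k, (M *ᵥ extendByZero k ω') i ^ 2) := by
  have hrow (i : Fin n) (hi : i ≠ k) : diagonalizeRow M k i = M i := updateRow_ne hi
  have hcol' (i : Fin n) (hi : i ≠ k) : diagonalizeRow M k i k = 0 := by
    rw [hrow i hi, hcol i hi]
  have hkk : diagonalizeRow M k k k = M k k := by simp [diagonalizeRow]
  have hk : (diagonalizeRow M k *ᵥ extendByZero k ω') k = 0 := by
    simp [diagonalizeRow, mulVec, extendByZero, Equiv.funSplitAt, Equiv.piSplitAt]
  have hR : ∑ i ∈ Finset.univ.erase k, (diagonalizeRow M k *ᵥ extendByZero k ω') i ^ 2 =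
      ∑ i ∈ Finset.univ.erase k, (M *ᵥ extendByZero k ω') i ^ 2 :=
    Finset.sum_congr rfl fun i hi => by simp only [mulVec, hrow i (Finset.ne_of_mem_erase hi)]
  simp only [tsum_psiSummand_funSplitAt_symm hcol', hkk, hk, hR, add_zero]

lemma tsum_psiSummand_funSplitAt_symm_le (hx : 0 < x) (hd : M k k ≠ 0)
    (hcol : ∀ i, i ≠ k → M i k = 0) (ω' : {j // j ≠ k} → ℤ) :
    ∑' t, psiSummand M x ((Equiv.funSplitAt k ℤ).symm (t, ω')) ≤
      ∑' t, psiSummand (diagonalizeRow M k) x ((Equiv.funSplitAt k ℤ).symm (t, ω')) := by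
  rw [tsum_psiSummand_funSplitAt_symm hcol, tsum_psiSummand_diagonalizeRow_funSplitAt_symm hcol]
  exact mul_le_mul_of_nonneg_right (tsum_gaussian_shift_le hx hd _) (exp_pos _).le

theorem psi_le_psi_diagonalizeRow (hx : 0 < x) (hd : M k k ≠ 0) (hcol : ∀ i, i ≠ k → M i k = 0)
    (hM : Summable (psiSummand M x)) (hM' : Summable (psiSummand (diagonalizeRow M k) x)) :
    psi M x ≤ psi (diagonalizeRow M k) x := by
  rw [psi_eq_tsum_psiSummand, psi_eq_tsum_psiSummand]
  exact hasSum_le (tsum_psiSummand_funSplitAt_symm_le hx hd hcol)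
    (hasSum_tsum_funSplitAt k hM) (hasSum_tsum_funSplitAt k hM')

theorem psi_lt_psi_diagonalizeRow (hx : 0 < x) (hd : M k k ≠ 0) (hcol : ∀ i, i ≠ k → M i k = 0)
    (hM : Summable (psiSummand M x)) (hM' : Summable (psiSummand (diagonalizeRow M k) x))
    {j : Fin n} (hj : ∀ m : ℤ, M k j ≠ M k k * m) :
    psi M x < psi (diagonalizeRow M k) x := by
  have hjk : j ≠ k := by rintro rfl; exact hj 1 (by simp)
  have hej : extendByZero k (Pi.single ⟨j, hjk⟩ 1) = Pi.single j 1 := by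
    funext i
    by_cases hi : i = k
    · subst hi; simp [extendByZero, Equiv.funSplitAt, Equiv.piSplitAt, hjk]
    · by_cases hij : i = j
      · subst hij; simp [extendByZero, Equiv.funSplitAt, Equiv.piSplitAt, hi]
      · simp [extendByZero, Equiv.funSplitAt, Equiv.piSplitAt, hi, hij]
  rw [psi_eq_tsum_psiSummand, psi_eq_tsum_psiSummand]
  refine hasSum_lt (i := Pi.single ⟨j, hjk⟩ 1) (tsum_psiSummand_funSplitAt_symm_le hx hd hcol) ?_
    (hasSum_tsum_funSplitAt k hM) (hasSum_tsum_funSplitAt k hM')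
  rw [tsum_psiSummand_funSplitAt_symm hcol, tsum_psiSummand_diagonalizeRow_funSplitAt_symm hcol]
  refine mul_lt_mul_of_pos_right (tsum_gaussian_shift_lt hx hd ?_) (exp_pos _)
  simpa [hej, mulVec_single] using hj

end RowStep

/-- Rows are diagonalized from the top down: once the rows above `k` are diagonal, column `k` of
an upper triangular matrix vanishes off the diagonal. -/
def diagonalizeFirstRows (M : Matrix (Fin n) (Fin n) ℝ) (m : ℕ) : Matrix (Fin n) (Fin n) ℝ :=
  of fun i => if (i : ℕ) < m then Pi.single i (M i i) else M i

section FirstRows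

variable {M : Matrix (Fin n) (Fin n) ℝ} {x : ℝ}

@[simp]
lemma diagonalizeFirstRows_apply_self (m : ℕ) (i : Fin n) :
    diagonalizeFirstRows M m i i = M i i := by
  by_cases hi : (i : ℕ) < m <;> simp [diagonalizeFirstRows, hi]

lemma diagonalizeFirstRows_zero : diagonalizeFirstRows M 0 = M := by
  ext i j; simp [diagonalizeFirstRows]

lemma diagonalizeFirstRows_of_le {m : ℕ} (hm : n ≤ m) :
    diagonalizeFirstRows M m = diagonal fun i => M i i := by
  ext i j
  simp [diagonalizeFirstRows, i.isLt.trans_le hm, diagonal_apply, Pi.single_apply, eq_comm]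

lemma diagonalizeFirstRows_succ (k : Fin n) :
    diagonalizeFirstRows M (k + 1) = diagonalizeRow (diagonalizeFirstRows M k) k := by
  ext i j
  by_cases hik : i = k
  · subst hik; simp [diagonalizeFirstRows, diagonalizeRow]
  · have : i ≤ k ↔ i < k := ⟨fun h => h.lt_of_ne hik, le_of_lt⟩
    simp [diagonalizeFirstRows, diagonalizeRow, updateRow_ne hik, this]

lemma blockTriangular_diagonalizeFirstRows (hM : M.BlockTriangular id) (m : ℕ) :
    (diagonalizeFirstRows M m).BlockTriangular id := by
  intro i j hji
  by_cases hi : (i : ℕ) < m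
  · simp [diagonalizeFirstRows, hi, (ne_of_lt hji : j ≠ i)]
  · simp [diagonalizeFirstRows, hi, hM hji]

lemma diagonalizeFirstRows_apply_col (hM : M.BlockTriangular id) {k i : Fin n} (hik : i ≠ k) :
    diagonalizeFirstRows M k i k = 0 := by
  rcases lt_or_gt_of_ne hik with h | h
  · simp [diagonalizeFirstRows, h, hik.symm]
  · simp [diagonalizeFirstRows, not_lt.2 h.le, hM h]

lemma summable_psiSummand_diagonalizeFirstRows (hx : 0 < x) (hM : M.BlockTriangular id)
    (hd : ∀ i, M i i ≠ 0) (m : ℕ) : Summable (psiSummand (diagonalizeFirstRows M m) x) := by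
  refine summable_psiSummand hx ?_
  rw [det_of_isUpperTriangular (blockTriangular_diagonalizeFirstRows hM m)]
  simpa using (Finset.prod_ne_zero_iff.2 fun i _ => hd i).isUnit

lemma psi_le_psi_diagonalizeFirstRows_succ (hx : 0 < x) (hM : M.BlockTriangular id)
    (hd : ∀ i, M i i ≠ 0) (m : ℕ) :
    psi (diagonalizeFirstRows M m) x ≤ psi (diagonalizeFirstRows M (m + 1)) x := by
  by_cases hm : m < n
  · obtain ⟨k, rfl⟩ : ∃ k : Fin n, (k : ℕ) = m := ⟨⟨m, hm⟩, rfl⟩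
    have hsucc := summable_psiSummand_diagonalizeFirstRows hx hM hd (k + 1)
    rw [diagonalizeFirstRows_succ] at hsucc ⊢
    exact psi_le_psi_diagonalizeRow hx (by simpa using hd k)
      (fun i hi => diagonalizeFirstRows_apply_col hM hi)
      (summable_psiSummand_diagonalizeFirstRows hx hM hd k) hsucc
  · rw [diagonalizeFirstRows_of_le (not_lt.1 hm), diagonalizeFirstRows_of_le (by omega)]

theorem psi_lt_psi_diagonal (hx : 0 < x) (hM : M.BlockTriangular id) (hd : ∀ i, M i i ≠ 0)
    {k j : Fin n} (hkj : ∀ m : ℤ, M k j ≠ M k k * m) :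
    psi M x < psi (diagonal fun i => M i i) x := by
  have hmono : Monotone fun m => psi (diagonalizeFirstRows M m) x :=
    monotone_nat_of_le_succ (psi_le_psi_diagonalizeFirstRows_succ hx hM hd)
  have hstep : psi (diagonalizeFirstRows M k) x < psi (diagonalizeFirstRows M (k + 1)) x := by
    have hsucc := summable_psiSummand_diagonalizeFirstRows hx hM hd (k + 1)
    rw [diagonalizeFirstRows_succ] at hsucc ⊢
    exact psi_lt_psi_diagonalizeRow hx (by simpa using hd k)
      (fun i hi => diagonalizeFirstRows_apply_col hM hi)
      (summable_psiSummand_diagonalizeFirstRows hx hM hd k) hsucc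
      (by simpa [diagonalizeFirstRows] using hkj)
  calc psi M x = psi (diagonalizeFirstRows M 0) x := by rw [diagonalizeFirstRows_zero]
    _ ≤ psi (diagonalizeFirstRows M k) x := hmono (Nat.zero_le _)
    _ < psi (diagonalizeFirstRows M (k + 1)) x := hstep
    _ ≤ psi (diagonalizeFirstRows M n) x := hmono k.isLt
    _ = psi (diagonal fun i => M i i) x := by rw [diagonalizeFirstRows_of_le le_rfl]

end FirstRows

lemma intCast_mulVec_intCast (U : Matrix (Fin n) (Fin n) ℤ) (ω : Fin n → ℤ) :
    (U.map (Int.cast : ℤ → ℝ) *ᵥ fun j => (ω j : ℝ)) = fun i => ((U *ᵥ ω) i : ℝ) :=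
  funext fun i => (RingHom.map_mulVec (Int.castRingHom ℝ) U ω i).symm

lemma latticeSet_mul_intCast {U : Matrix (Fin n) (Fin n) ℤ} (hU : IsUnit U.det)
    (M : Matrix (Fin n) (Fin n) ℝ) :
    latticeSet (M * U.map (Int.cast : ℤ → ℝ)) = latticeSet M := by
  ext v
  constructor
  · rintro ⟨ω, rfl⟩
    exact ⟨U *ᵥ ω, by rw [← mulVec_mulVec, intCast_mulVec_intCast]⟩
  · rintro ⟨ω, rfl⟩
    refine ⟨U⁻¹ *ᵥ ω, ?_⟩
    rw [← mulVec_mulVec, intCast_mulVec_intCast, mulVec_mulVec, mul_nonsing_inv _ hU, one_mulVec]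

lemma latticeSet_eq_latticeSet_diagonal {a : Fin n → ℝ} (ha : ∀ i, a i ≠ 0)
    {M : Matrix (Fin n) (Fin n) ℝ} (hM : M.BlockTriangular id) (hdiag : ∀ i, M i i = a i)
    (hdvd : ∀ i j, ∃ m : ℤ, M i j = a i * m) : latticeSet M = latticeSet (diagonal a) := by
  choose U hU using hdvd
  have hMU : M = diagonal a * (of U).map (Int.cast : ℤ → ℝ) := by
    ext i j; simp [diagonal_mul, hU]
  have hUtri : (of U).BlockTriangular id := fun i j hji => by
    have := hU i j
    rw [hM hji, zero_eq_mul] at this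
    exact_mod_cast this.resolve_left (ha i)
  have hUdiag (i : Fin n) : U i i = 1 := by
    have := hU i i
    rw [hdiag i, left_eq_mul₀ (ha i)] at this
    exact_mod_cast this
  have hdet : (of U).det = 1 := by
    simp [det_of_isUpperTriangular hUtri, hUdiag]
  rw [hMU, latticeSet_mul_intCast (by simp [hdet])]

/-- Skewing theorem: a skewing of an orthogonal lattice, i.e. a different lattice generated
by an upper triangular matrix with the same (positive) diagonal, has strictly smaller
psi function everywhere. -/
theorem psi_skewing_lt {n : ℕ} (a : Fin n → ℝ) (ha : ∀ i, 0 < a i)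
    (Ms : Matrix (Fin n) (Fin n) ℝ)
    (htri : Ms.BlockTriangular (id : Fin n → Fin n))
    (hdiag : ∀ i, Ms i i = a i)
    (hne : latticeSet Ms ≠ latticeSet (Matrix.diagonal a))
    (x : ℝ) (hx : 0 < x) :
    psi Ms x < psi (Matrix.diagonal a) x := by
  obtain ⟨k, j, hkj⟩ : ∃ k j, ∀ m : ℤ, Ms k j ≠ a k * m := by
    by_contra! h
    exact hne (latticeSet_eq_latticeSet_diagonal (fun i => (ha i).ne') htri hdiag h)
  have hdiagonal : diagonal a = diagonal fun i => Ms i i := by simp [hdiag]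
  rw [hdiagonal]
  exact psi_lt_psi_diagonal hx htri (fun i => hdiag i ▸ (ha i).ne') (by simpa [hdiag] using hkj)
end
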